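/- Let X be a nonempty set, x₀ ∈ X, and β ∈ ℝ. Let F be a map from real-valued functions on X to real-valued functions on X that is translation invariant: F(f + c)(x) = F(f)(x) for every function f : X → ℝ, every constant c ∈ ℝ, and every x ∈ X. Let φ̄ : [0,∞) × X → ℝ be such that for each x the map t ↦ φ̄(t,x) is differentiable with ∂φ̄/∂t(t,x) = F(φ̄(t,·))(x) - β for all t ≥ 0, and t ↦ φ̄(t,x₀) is continuous. Define φ(t,x) = φ̄(t,x) - exp(-t)·∫₀ᵗ exp(s)·φ̄(s,x₀) ds + β·(1 - exp(-t)). Then: (i) φ(0,·) = φ̄(0,·); (ii) φ(t,x) - φ(t,x₀) = φ̄(t,x) - φ̄(t,x₀) for all t ≥ 0 and x ∈ X; and (iii) for each x the map t ↦ φ(t,x) is differentiable with ∂φ/∂t(t,x) = F(φ(t,·))(x) - φ(t,x₀). -/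

import Mathlib

/-!
Translation invariance of `F` means that `φ̄(t,·)` and `φ(t,·)` have the same image under `F`,
since they differ by a constant `c(t) = β (1 - e^{-t}) - m(t)`. The exponential average
`m(t) = e^{-t} ∫₀ᵗ e^s φ̄(s,x₀) ds` solves `m' = φ̄(·,x₀) - m`, so `c'(t) = β - φ(t,x₀)`, which
turns the value iteration equation for `φ̄` into the relative value iteration equation for `φ`.
-/

open Set Real

theorem hasDerivWithinAt_integral_Ici {E : Type*} [NormedAddCommGroup E] [NormedSpace ℝ E]
    [CompleteSpace E] {g : ℝ → E} {a t : ℝ} (hg : ContinuousOn g (Ici a)) (ht : a ≤ t) :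
    HasDerivWithinAt (fun u => ∫ s in a..u, g s) (g t) (Ici a) t := by
  have hint : IntervalIntegrable g MeasureTheory.volume a t :=
    (hg.mono (by rw [uIcc_of_le ht]; exact Icc_subset_Ici_self)).intervalIntegrable
  have hmeas : ∀ l, Ici a ∈ l → StronglyMeasurableAtFilter g l := fun l hl =>
    ⟨Ici a, hl, hg.aestronglyMeasurable measurableSet_Ici⟩
  rcases ht.eq_or_lt with rfl | hat
  · exact intervalIntegral.integral_hasDerivWithinAt_right hint
      (hmeas _ (nhdsWithin_mono _ Ioi_subset_Ici_self self_mem_nhdsWithin))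
      ((hg a self_mem_Ici).mono Ioi_subset_Ici_self)
  · have hnhds : Ici a ∈ nhds t := Ici_mem_nhds hat
    exact (intervalIntegral.integral_hasDerivAt_right hint (hmeas _ hnhds)
      ((hg t ht).continuousAt hnhds)).hasDerivWithinAt

theorem hasDerivWithinAt_exp_neg_mul_integral_exp_mul {g : ℝ → ℝ} {t : ℝ}
    (hg : ContinuousOn g (Ici 0)) (ht : 0 ≤ t) :
    HasDerivWithinAt (fun u => exp (-u) * ∫ s in (0 : ℝ)..u, exp s * g s)
      (g t - exp (-t) * ∫ s in (0 : ℝ)..t, exp s * g s) (Ici 0) t := by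
  have hexp : HasDerivWithinAt (fun u => exp (-u)) (-exp (-t)) (Ici 0) t := by
    simpa using ((hasDerivAt_neg t).exp).hasDerivWithinAt
  have hint := hasDerivWithinAt_integral_Ici (g := fun s => exp s * g s)
    (continuous_exp.continuousOn.mul hg) ht
  refine (hexp.mul hint).congr_deriv ?_
  rw [← mul_assoc, ← exp_add, neg_add_cancel, exp_zero]
  ring

theorem stmt_11_general (X : Type*) (x₀ : X) (β : ℝ)
    (F : (X → ℝ) → (X → ℝ))
    (hF : ∀ (f : X → ℝ) (c : ℝ) (x : X), F (fun y => f y + c) x = F f x)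
    (φ' : ℝ → X → ℝ)
    (hderiv : ∀ x : X, ∀ t ∈ Set.Ici (0 : ℝ),
      HasDerivWithinAt (fun s => φ' s x) (F (φ' t) x - β) (Set.Ici 0) t)
    (hcont : ContinuousOn (fun t => φ' t x₀) (Set.Ici 0))
    (φ : ℝ → X → ℝ)
    (hφ : ∀ (t : ℝ) (x : X),
      φ t x = φ' t x - Real.exp (-t) * (∫ s in (0 : ℝ)..t, Real.exp s * φ' s x₀)
        + β * (1 - Real.exp (-t))) :
    (∀ x : X, φ 0 x = φ' 0 x) ∧
    (∀ x : X, ∀ t ∈ Set.Ici (0 : ℝ), φ t x - φ t x₀ = φ' t x - φ' t x₀) ∧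
    (∀ x : X, ∀ t ∈ Set.Ici (0 : ℝ),
      HasDerivWithinAt (fun s => φ s x) (F (φ t) x - φ t x₀) (Set.Ici 0) t) := by
  set c : ℝ → ℝ := fun t => β * (1 - exp (-t)) - exp (-t) * ∫ s in (0 : ℝ)..t, exp s * φ' s x₀
  have hφc : ∀ t, φ t = fun x => φ' t x + c t := fun t => funext fun x => by rw [hφ]; ring
  have hc : ∀ t ∈ Ici (0 : ℝ), HasDerivWithinAt c (β - φ t x₀) (Ici 0) t := fun t ht => by
    have hexp : HasDerivWithinAt (fun u => exp (-u)) (-exp (-t)) (Ici 0) t := by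
      simpa using ((hasDerivAt_neg t).exp).hasDerivWithinAt
    refine ((hexp.const_sub 1).const_mul β |>.sub
      (hasDerivWithinAt_exp_neg_mul_integral_exp_mul hcont ht)).congr_deriv ?_
    rw [hφ]
    ring
  refine ⟨fun x => by simp [hφc, c], fun x t _ => by simp only [hφc]; ring, fun x t ht => ?_⟩
  have hFφ : F (φ t) x = F (φ' t) x := by rw [hφc]; exact hF _ _ x
  rw [show (fun s => φ s x) = fun s => φ' s x + c s from funext fun s => congrFun (hφc s) x]
  exact ((hderiv x t ht).add (hc t ht)).congr_deriv (by rw [hFφ]; ring)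

/-- Abstract form of Lemma 3.3: if `F` is translation invariant and `φ̄` solves the
value-iteration equation `∂φ̄/∂t = F(φ̄(t,·)) - β`, then
`φ(t,x) = φ̄(t,x) - e^{-t} ∫₀ᵗ e^s φ̄(s,x₀) ds + β (1 - e^{-t})` satisfies
`φ(0,·) = φ̄(0,·)`, `φ(t,x) - φ(t,x₀) = φ̄(t,x) - φ̄(t,x₀)`, and the relative
value-iteration equation `∂φ/∂t = F(φ(t,·)) - φ(t,x₀)`. -/
theorem stmt_11 (X : Type*) [Nonempty X] (x₀ : X) (β : ℝ)
    (F : (X → ℝ) → (X → ℝ))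
    (hF : ∀ (f : X → ℝ) (c : ℝ) (x : X), F (fun y => f y + c) x = F f x)
    (φ' : ℝ → X → ℝ)
    (hderiv : ∀ x : X, ∀ t ∈ Set.Ici (0 : ℝ),
      HasDerivWithinAt (fun s => φ' s x) (F (φ' t) x - β) (Set.Ici 0) t)
    (hcont : ContinuousOn (fun t => φ' t x₀) (Set.Ici 0))
    (φ : ℝ → X → ℝ)
    (hφ : ∀ (t : ℝ) (x : X),
      φ t x = φ' t x - Real.exp (-t) * (∫ s in (0 : ℝ)..t, Real.exp s * φ' s x₀)
        + β * (1 - Real.exp (-t))) :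
    (∀ x : X, φ 0 x = φ' 0 x) ∧
    (∀ x : X, ∀ t ∈ Set.Ici (0 : ℝ), φ t x - φ t x₀ = φ' t x - φ' t x₀) ∧
    (∀ x : X, ∀ t ∈ Set.Ici (0 : ℝ),
      HasDerivWithinAt (fun s => φ s x) (F (φ t) x - φ t x₀) (Set.Ici 0) t) :=
  stmt_11_general X x₀ β F hF φ' hderiv hcont φ hφ
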